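/- (Lemma 2.5, coupled fast geometric convergence) Let {A_i}_{i≥0} and {B_i}_{i≥0} be sequences of positive real numbers and let C > 1, b > 1, β > 0, γ > 0 be such that for every i ≥ 0: A_{i+1} ≤ C b^i (A_i^{1+β} + A_i^{β} B_i^{1+γ}) and B_{i+1} ≤ C b^i (A_i + B_i^{1+γ}). Set σ = min{β, γ}. If A_0 + B_0^{1+γ} ≤ (2C)^{−(1+γ)/σ} b^{−(1+γ)/σ²}, then A_i → 0 and B_i → 0 as i → ∞. -/
import Mathlib


open Filter Real

set_option maxHeartbeats 1000000 in
/-- **Lemma 2.5 (coupled fast geometric convergence).** If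
`A_{i+1} ≤ C b^i (A_i^{1+β} + A_i^β B_i^{1+γ})`, `B_{i+1} ≤ C b^i (A_i + B_i^{1+γ})` with
`C, b > 1`, `β, γ > 0`, `σ = min β γ`, and
`A_0 + B_0^{1+γ} ≤ (2C)^{-(1+γ)/σ} b^{-(1+γ)/σ²}`, then `A_i → 0` and `B_i → 0`. -/
theorem coupled_fast_geometric_convergence
    (A B : ℕ → ℝ) (hA : ∀ i, 0 < A i) (hB : ∀ i, 0 < B i)
    (C b β γ : ℝ) (hC : 1 < C) (hb : 1 < b) (hβ : 0 < β) (hγ : 0 < γ)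
    (hrecA : ∀ i : ℕ, A (i + 1) ≤ C * b ^ i * (A i ^ (1 + β) + A i ^ β * B i ^ (1 + γ)))
    (hrecB : ∀ i : ℕ, B (i + 1) ≤ C * b ^ i * (A i + B i ^ (1 + γ)))
    (h0 : A 0 + B 0 ^ (1 + γ) ≤
      (2 * C) ^ (-((1 + γ) / min β γ)) * b ^ (-((1 + γ) / (min β γ) ^ 2))) :
    Tendsto A atTop (nhds 0) ∧ Tendsto B atTop (nhds 0) := by
  have hσ : 0 < min β γ := lt_min hβ hγ
  set σ := min β γ with hσdef
  have hσβ : σ ≤ β := min_le_left _ _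
  have hσγ : σ ≤ γ := min_le_right _ _
  have hσne : σ ≠ 0 := ne_of_gt hσ
  set D : ℕ → ℝ := fun i => A i + B i ^ (1 + γ) with hDdef
  have hD : ∀ i, 0 < D i := fun i => add_pos (hA i) (rpow_pos_of_pos (hB i) _)
  have hAD : ∀ i, A i ≤ D i := fun i =>
    le_add_of_nonneg_right (rpow_pos_of_pos (hB i) _).le
  have h2C : (1:ℝ) < 2 * C := by nlinarith
  have hb0 : (0:ℝ) < b := lt_trans one_pos hb
  set M : ℝ := (2 * C) ^ (1 + γ) with hMdef
  set K : ℝ := b ^ (1 + γ) with hKdef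
  have hM1 : 1 ≤ M := Real.one_le_rpow h2C.le (by positivity)
  have hK1 : 1 < K := Real.one_lt_rpow_iff_of_pos hb0 |>.mpr (Or.inl ⟨hb, by positivity⟩)
  have hK0 : 0 < K := lt_trans one_pos hK1
  have hM0 : 0 < M := lt_of_lt_of_le one_pos hM1
  -- key one-step inequality
  have hstep : ∀ i, D i ≤ 1 → D (i + 1) ≤ M * K ^ i * D i ^ (1 + σ) := by
    intro i hDi1
    have hbi : (1:ℝ) ≤ C * b ^ i := by
      have : (1:ℝ) ≤ b ^ i := one_le_pow₀ hb.le
      nlinarith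
    have hbi0 : (0:ℝ) < C * b ^ i := lt_of_lt_of_le one_pos hbi
    have hA1 : A (i + 1) ≤ C * b ^ i * (D i ^ (1 + σ)) := by
      have e : A i ^ (1 + β) + A i ^ β * B i ^ (1 + γ) = A i ^ β * D i := by
        rw [Real.rpow_add (hA i), Real.rpow_one]; ring
      have h1 : A i ^ β ≤ D i ^ β := rpow_le_rpow (hA i).le (hAD i) hβ.le
      have h2 : D i ^ β * D i = D i ^ (1 + β) := by
        rw [Real.rpow_add (hD i), Real.rpow_one]; ring
      have h3 : D i ^ (1 + β) ≤ D i ^ (1 + σ) :=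
        rpow_le_rpow_of_exponent_ge (hD i) hDi1 (by linarith)
      calc A (i + 1) ≤ C * b ^ i * (A i ^ β * D i) := by rw [← e]; exact hrecA i
        _ ≤ C * b ^ i * (D i ^ β * D i) := by
            have := mul_le_mul_of_nonneg_right h1 (hD i).le
            nlinarith
        _ = C * b ^ i * D i ^ (1 + β) := by rw [h2]
        _ ≤ C * b ^ i * D i ^ (1 + σ) := by nlinarith
    have hB1 : B (i + 1) ^ (1 + γ) ≤ (C * b ^ i) ^ (1 + γ) * D i ^ (1 + σ) := by
      have h1 : B (i + 1) ^ (1 + γ) ≤ (C * b ^ i * D i) ^ (1 + γ) :=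
        rpow_le_rpow (hB _).le (hrecB i) (by positivity)
      have h2 : (C * b ^ i * D i) ^ (1 + γ) = (C * b ^ i) ^ (1 + γ) * D i ^ (1 + γ) :=
        mul_rpow hbi0.le (hD i).le
      have h3 : D i ^ (1 + γ) ≤ D i ^ (1 + σ) :=
        rpow_le_rpow_of_exponent_ge (hD i) hDi1 (by linarith)
      calc B (i + 1) ^ (1 + γ) ≤ (C * b ^ i) ^ (1 + γ) * D i ^ (1 + γ) := by
            rw [← h2]; exact h1
        _ ≤ (C * b ^ i) ^ (1 + γ) * D i ^ (1 + σ) := by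
            have : (0:ℝ) ≤ (C * b ^ i) ^ (1 + γ) := (rpow_pos_of_pos hbi0 _).le
            nlinarith
    have hc1 : C * b ^ i ≤ (C * b ^ i) ^ (1 + γ) := by
      calc C * b ^ i = (C * b ^ i) ^ (1:ℝ) := (Real.rpow_one _).symm
        _ ≤ (C * b ^ i) ^ (1 + γ) := rpow_le_rpow_of_exponent_le hbi (by linarith)
    have hc2 : (2:ℝ) * (C * b ^ i) ^ (1 + γ) ≤ M * K ^ i := by
      have e1 : (C * b ^ i) ^ (1 + γ) = C ^ (1 + γ) * K ^ i := by
        rw [mul_rpow (by positivity) (by positivity), hKdef,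
          ← Real.rpow_natCast b i, ← Real.rpow_natCast ((b:ℝ) ^ ((1:ℝ)+γ)) i,
          ← Real.rpow_mul hb0.le, ← Real.rpow_mul hb0.le]
        ring_nf
      have e2 : M = 2 ^ (1 + γ) * C ^ (1 + γ) := by
        rw [hMdef, mul_rpow (by norm_num) (by positivity)]
      have h2le : (2:ℝ) ≤ 2 ^ (1 + γ) := by
        calc (2:ℝ) = 2 ^ (1:ℝ) := (Real.rpow_one _).symm
          _ ≤ 2 ^ (1 + γ) := rpow_le_rpow_of_exponent_le (by norm_num) (by linarith)
      rw [e1, e2]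
      have hC1 : (0:ℝ) < C ^ ((1:ℝ) + γ) := rpow_pos_of_pos (by linarith) _
      have hKi : (0:ℝ) < K ^ i := pow_pos hK0 i
      nlinarith
    have hpow : (0:ℝ) < D i ^ (1 + σ) := rpow_pos_of_pos (hD i) _
    calc D (i + 1) = A (i + 1) + B (i + 1) ^ (1 + γ) := rfl
      _ ≤ C * b ^ i * D i ^ (1 + σ) + (C * b ^ i) ^ (1 + γ) * D i ^ (1 + σ) :=
          add_le_add hA1 hB1
      _ = (C * b ^ i + (C * b ^ i) ^ (1 + γ)) * D i ^ (1 + σ) := by ring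
      _ ≤ (2 * (C * b ^ i) ^ (1 + γ)) * D i ^ (1 + σ) :=
          mul_le_mul_of_nonneg_right (by linarith) hpow.le
      _ ≤ M * K ^ i * D i ^ (1 + σ) :=
          mul_le_mul_of_nonneg_right hc2 hpow.le
  -- the majorant
  set E : ℕ → ℝ := fun i => M ^ (-(1 / σ)) * K ^ (-(1 / σ ^ 2) - (i:ℝ) / σ) with hEdef
  have hE1 : ∀ i, E i ≤ 1 := by
    intro i
    have h1 : M ^ (-(1 / σ)) ≤ 1 :=
      rpow_le_one_of_one_le_of_nonpos hM1 (by
        have : (0:ℝ) < 1 / σ := by positivity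
        linarith)
    have h2 : K ^ (-(1 / σ ^ 2) - (i:ℝ) / σ) ≤ 1 :=
      rpow_le_one_of_one_le_of_nonpos hK1.le (by
        have h3 : (0:ℝ) < 1 / σ ^ 2 := by positivity
        have h4 : (0:ℝ) ≤ (i:ℝ) / σ := by positivity
        linarith)
    have h5 : (0:ℝ) ≤ M ^ (-(1 / σ)) := (rpow_pos_of_pos hM0 _).le
    have h6 : (0:ℝ) ≤ K ^ (-(1 / σ ^ 2) - (i:ℝ) / σ) := (rpow_pos_of_pos hK0 _).le
    show M ^ (-(1 / σ)) * K ^ (-(1 / σ ^ 2) - (i:ℝ) / σ) ≤ 1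
    nlinarith
  have hDE : ∀ i, D i ≤ E i := by
    intro i
    induction i with
    | zero =>
      have e1 : (2 * C) ^ (-((1 + γ) / σ)) = M ^ (-(1 / σ)) := by
        rw [hMdef, ← Real.rpow_mul (by positivity : (0:ℝ) ≤ 2 * C)]
        congr 1; field_simp
      have e2 : b ^ (-((1 + γ) / σ ^ 2)) = K ^ (-(1 / σ ^ 2)) := by
        rw [hKdef, ← Real.rpow_mul hb0.le]
        congr 1; field_simp
      show A 0 + B 0 ^ (1 + γ) ≤ M ^ (-(1 / σ)) * K ^ (-(1 / σ ^ 2) - ((0:ℕ):ℝ) / σ)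
      rw [Nat.cast_zero, zero_div, sub_zero, ← e1, ← e2]
      exact h0
    | succ i ih =>
      have hDi1 : D i ≤ 1 := ih.trans (hE1 i)
      have h1 := hstep i hDi1
      have h2 : D i ^ (1 + σ) ≤ E i ^ (1 + σ) :=
        rpow_le_rpow (hD i).le ih (by positivity)
      have h3 : M * K ^ i * E i ^ (1 + σ) = E (i + 1) := by
        rw [hEdef]
        simp only []
        rw [mul_rpow (rpow_pos_of_pos hM0 _).le (rpow_pos_of_pos hK0 _).le,
          ← Real.rpow_mul hM0.le, ← Real.rpow_mul hK0.le,
          ← Real.rpow_natCast K i]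
        rw [show M * K ^ ((i:ℕ):ℝ) * (M ^ (-(1 / σ) * (1 + σ)) *
              K ^ ((-(1 / σ ^ 2) - (i:ℝ) / σ) * (1 + σ)))
            = (M ^ (1:ℝ) * M ^ (-(1 / σ) * (1 + σ))) *
              (K ^ ((i:ℝ)) * K ^ ((-(1 / σ ^ 2) - (i:ℝ) / σ) * (1 + σ)))
          from by rw [Real.rpow_one]; ring]
        rw [← Real.rpow_add hM0, ← Real.rpow_add hK0]
        congr 1
        · congr 1; field_simp; try ring
        · congr 1; push_cast; field_simp; try ring
      calc D (i + 1) ≤ M * K ^ i * D i ^ (1 + σ) := h1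
        _ ≤ M * K ^ i * E i ^ (1 + σ) :=
            mul_le_mul_of_nonneg_left h2 (by positivity)
        _ = E (i + 1) := h3
  -- geometric form of the majorant
  set r : ℝ := K ^ (-(1 / σ)) with hrdef
  have hr0 : 0 ≤ r := (rpow_pos_of_pos hK0 _).le
  have hr1 : r < 1 := rpow_lt_one_of_one_lt_of_neg hK1 (by
    have : (0:ℝ) < 1 / σ := by positivity
    linarith)
  set c : ℝ := M ^ (-(1 / σ)) * K ^ (-(1 / σ ^ 2)) with hcdef
  have hEr : ∀ i, E i = c * r ^ i := by
    intro i
    rw [hEdef, hcdef, hrdef]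
    simp only []
    rw [show -(1 / σ ^ 2) - (i:ℝ) / σ = -(1 / σ ^ 2) + -(1 / σ) * (i:ℝ) from by ring,
      Real.rpow_add hK0, Real.rpow_mul hK0.le, Real.rpow_natCast]
    ring
  have hDle : ∀ i, D i ≤ c * r ^ i := fun i => (hDE i).trans (le_of_eq (hEr i))
  have htend : Tendsto (fun i => c * r ^ i) atTop (nhds 0) := by
    simpa using (tendsto_pow_atTop_nhds_zero_of_lt_one hr0 hr1).const_mul c
  have hDtend : Tendsto D atTop (nhds 0) :=
    squeeze_zero (fun i => (hD i).le) hDle htend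
  have hAt : Tendsto A atTop (nhds 0) :=
    squeeze_zero (fun i => (hA i).le) (fun i => (hAD i).trans (hDle i)) htend
  have hBle : ∀ i, B i ≤ D i ^ (1 / (1 + γ)) := by
    intro i
    have h1 : B i ^ (1 + γ) ≤ D i := le_add_of_nonneg_left (hA i).le
    have h2 := rpow_le_rpow (rpow_pos_of_pos (hB i) _).le h1 (by positivity : (0:ℝ) ≤ 1 / (1 + γ))
    rwa [← Real.rpow_mul (hB i).le, mul_one_div,
      div_self (by positivity : (1:ℝ) + γ ≠ 0), Real.rpow_one] at h2
  have hBt : Tendsto B atTop (nhds 0) := by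
    have h2 : Tendsto (fun i => D i ^ (1 / (1 + γ))) atTop (nhds 0) := by
      have h3 := hDtend.rpow_const (p := 1 / (1 + γ)) (Or.inr (by positivity))
      rw [Real.zero_rpow (by positivity : (1:ℝ) / (1 + γ) ≠ 0)] at h3
      exact h3
    exact squeeze_zero (fun i => (hB i).le) hBle h2
  exact ⟨hAt, hBt⟩
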